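/- arXiv:0804.0091 — 4 statements merged into one kernel-verified Lean document; each statement's English description precedes it below -/
import Mathlib

section
/- Let c₁, c₂ be real, ℭ ≠ 0 real, and α₁, α₂, α₃ distinct reals, each distinct from c₁, satisfying α_j³ + aα_j² − 𝔅α_j + c₁ℭ = 0 where 𝔅 = 2c₁a + 3c₁² + c₂b + 3c₂² and ℭ = ac₁ + bc₂ + 2c₁² + 2c₂². Set β_j = c₂α_j/(α_j − c₁) and γ_j² as in the torus construction (γ₁² = (ℭ+α₂α₃)/(ℭ(α₁−α₂)(α₁−α₃)) etc.). Then γ₁²β₁ + γ₂²β₂ + γ₃²β₃ = 0. -/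
theorem gamma_sq_beta_sum (a b c₁ c₂ B C α₁ α₂ α₃ β₁ β₂ β₃ γ₁sq γ₂sq γ₃sq : ℝ)
    (hB : B = 2*c₁*a + 3*c₁^2 + c₂*b + 3*c₂^2)
    (hC : C = a*c₁ + b*c₂ + 2*c₁^2 + 2*c₂^2)
    (hCne : C ≠ 0)
    (h12 : α₁ ≠ α₂) (h13 : α₁ ≠ α₃) (h23 : α₂ ≠ α₃)
    (hc1 : α₁ ≠ c₁) (hc2 : α₂ ≠ c₁) (hc3 : α₃ ≠ c₁)
    (hr1 : α₁^3 + a*α₁^2 - B*α₁ + c₁*C = 0)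
    (hr2 : α₂^3 + a*α₂^2 - B*α₂ + c₁*C = 0)
    (hr3 : α₃^3 + a*α₃^2 - B*α₃ + c₁*C = 0)
    (hβ1 : β₁ = c₂*α₁/(α₁ - c₁)) (hβ2 : β₂ = c₂*α₂/(α₂ - c₁)) (hβ3 : β₃ = c₂*α₃/(α₃ - c₁))
    (hγ1 : γ₁sq = (C + α₂*α₃)/(C*(α₁-α₂)*(α₁-α₃)))
    (hγ2 : γ₂sq = (C + α₁*α₃)/(C*(α₂-α₁)*(α₂-α₃)))
    (hγ3 : γ₃sq = (C + α₁*α₂)/(C*(α₃-α₁)*(α₃-α₂))) :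
    γ₁sq*β₁ + γ₂sq*β₂ + γ₃sq*β₃ = 0 := by
  have d12 : α₁ - α₂ ≠ 0 := sub_ne_zero.mpr h12
  have d13 : α₁ - α₃ ≠ 0 := sub_ne_zero.mpr h13
  have d23 : α₂ - α₃ ≠ 0 := sub_ne_zero.mpr h23
  have d21 : α₂ - α₁ ≠ 0 := sub_ne_zero.mpr h12.symm
  have d31 : α₃ - α₁ ≠ 0 := sub_ne_zero.mpr h13.symm
  have d32 : α₃ - α₂ ≠ 0 := sub_ne_zero.mpr h23.symm
  have e1 : α₁ - c₁ ≠ 0 := sub_ne_zero.mpr hc1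
  have e2 : α₂ - c₁ ≠ 0 := sub_ne_zero.mpr hc2
  have e3 : α₃ - c₁ ≠ 0 := sub_ne_zero.mpr hc3
  -- Differences of the root equations (Newton-type relations)
  have s12 : α₁^2 + α₁*α₂ + α₂^2 + a*(α₁+α₂) - B = 0 := by
    have h : (α₁ - α₂) * (α₁^2 + α₁*α₂ + α₂^2 + a*(α₁+α₂) - B) = 0 := by
      linear_combination hr1 - hr2
    exact (mul_eq_zero.mp h).resolve_left d12
  have s13 : α₁^2 + α₁*α₃ + α₃^2 + a*(α₁+α₃) - B = 0 := by
    have h : (α₁ - α₃) * (α₁^2 + α₁*α₃ + α₃^2 + a*(α₁+α₃) - B) = 0 := by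
      linear_combination hr1 - hr3
    exact (mul_eq_zero.mp h).resolve_left d13
  -- Vieta: sum of roots
  have ha : a = -(α₁ + α₂ + α₃) := by
    have h : (α₂ - α₃) * (α₁ + α₂ + α₃ + a) = 0 := by
      linear_combination s12 - s13
    have := (mul_eq_zero.mp h).resolve_left d23
    linarith
  subst ha
  -- Vieta: sum of pairwise products
  have hb : B = -(α₁*α₂ + α₁*α₃ + α₂*α₃) := by linear_combination -s12
  subst hb
  -- Vieta: product of roots
  have hprod : α₁ * α₂ * α₃ = -(c₁ * C) := by linear_combination hr3
  -- Nonvanishing of the three denominators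
  have hd1 : C*(α₁-α₂)*(α₁-α₃)*(α₁-c₁) ≠ 0 :=
    mul_ne_zero (mul_ne_zero (mul_ne_zero hCne d12) d13) e1
  have hd2 : C*(α₂-α₁)*(α₂-α₃)*(α₂-c₁) ≠ 0 :=
    mul_ne_zero (mul_ne_zero (mul_ne_zero hCne d21) d23) e2
  have hd3 : C*(α₃-α₁)*(α₃-α₂)*(α₃-c₁) ≠ 0 :=
    mul_ne_zero (mul_ne_zero (mul_ne_zero hCne d31) d32) e3
  rw [hβ1, hβ2, hβ3, hγ1, hγ2, hγ3, div_mul_div_comm, div_mul_div_comm, div_mul_div_comm,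
    div_add_div _ _ hd1 hd2, div_add_div _ _ (mul_ne_zero hd1 hd2) hd3, div_eq_zero_iff]
  left
  linear_combination (-(C^2*c₂) * ((α₁-α₂)*(α₁-α₃)*(α₂-α₃))^2) * hprod
end

section
/- Under the same hypotheses (α₁, α₂, α₃ distinct roots of α³ + aα² − 𝔅α + c₁ℭ = 0, each ≠ c₁, β_j = c₂α_j/(α_j − c₁), γ_j² the stated rational expressions), one has γ₁²α₁β₁ + γ₂²α₂β₂ + γ₃²α₃β₃ = 0 and γ₁²β₁² + γ₂²β₂² + γ₃²β₃² = 1. -/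
/-!
Since `α₁, α₂, α₃` are the roots of `p(t) = t³ + a t² - 𝔅 t + c₁ℭ`, we have `α₁α₂α₃ = -c₁ℭ`, hence
`α_j (ℭ + α_k α_l) = ℭ (α_j - c₁)` and `γ_j² α_j = (α_j - c₁) / p'(α_j)`. The two sums become
`c₂ Σ α_j / p'(α_j)` and `c₂² Σ α_j / ((α_j - c₁) p'(α_j))`: residue sums of the rational functions
`t / p(t)` and `t / ((t - c₁) p(t))`. The first vanishes, the second equals `-c₁ / p(c₁)`,
and `p(c₁) = -c₁c₂²` by the definitions of `𝔅` and `ℭ`.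
-/

section ThreePoints

variable {K : Type*} [Field K] {x y z : K}

theorem cubic_eq_prod_sub_of_roots {a b c : K} (hxy : x ≠ y) (hxz : x ≠ z) (hyz : y ≠ z)
    (hx : x ^ 3 + a * x ^ 2 + b * x + c = 0) (hy : y ^ 3 + a * y ^ 2 + b * y + c = 0)
    (hz : z ^ 3 + a * z ^ 2 + b * z + c = 0) (t : K) :
    t ^ 3 + a * t ^ 2 + b * t + c = (t - x) * (t - y) * (t - z) := by
  have hxy' : x ^ 2 + x * y + y ^ 2 + a * (x + y) + b = 0 :=
    mul_left_cancel₀ (sub_ne_zero.2 hxy) (by linear_combination hx - hy)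
  have hxz' : x ^ 2 + x * z + z ^ 2 + a * (x + z) + b = 0 :=
    mul_left_cancel₀ (sub_ne_zero.2 hxz) (by linear_combination hx - hz)
  have hsum : x + y + z + a = 0 :=
    mul_left_cancel₀ (sub_ne_zero.2 hyz) (by linear_combination hxy' - hxz')
  linear_combination (t - x) * (t - y) * hsum + (t - x) * hxy' + hx

theorem div_sub_mul_sub_add_cyclic_eq_zero (hxy : x ≠ y) (hxz : x ≠ z) (hyz : y ≠ z) :
    x / ((x - y) * (x - z)) + y / ((y - x) * (y - z)) + z / ((z - x) * (z - y)) = 0 := by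
  field_simp [sub_ne_zero.2 hxy, sub_ne_zero.2 hxz, sub_ne_zero.2 hyz]
  ring

theorem div_sub_mul_sub_mul_sub_add_cyclic {t : K} (hxy : x ≠ y) (hxz : x ≠ z) (hyz : y ≠ z)
    (htx : t ≠ x) (hty : t ≠ y) (htz : t ≠ z) :
    x / ((x - t) * (x - y) * (x - z)) + y / ((y - t) * (y - x) * (y - z))
      + z / ((z - t) * (z - x) * (z - y)) = -t / ((t - x) * (t - y) * (t - z)) := by
  field_simp [sub_ne_zero.2 hxy, sub_ne_zero.2 hxz, sub_ne_zero.2 hyz, sub_ne_zero.2 htx,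
    sub_ne_zero.2 hty, sub_ne_zero.2 htz]
  ring

end ThreePoints

section Frame

variable {K : Type*} [Field K]

/-- `γ_j²` of the paper, with `x = α_j` and `y, z` the other two roots. -/
def gammaSq (C x y z : K) : K := (C + y * z) / (C * (x - y) * (x - z))

def beta (c₁ c₂ x : K) : K := c₂ * x / (x - c₁)

variable {C c₁ c₂ x y z : K}

theorem gammaSq_mul_self (hC : C ≠ 0) (hprod : c₁ * C = -(x * y * z)) :
    gammaSq C x y z * x = (x - c₁) / ((x - y) * (x - z)) :=
  calc (C + y * z) / (C * (x - y) * (x - z)) * x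
      = C * (x - c₁) / (C * ((x - y) * (x - z))) := by
        rw [div_mul_eq_mul_div, mul_assoc C]
        congr 1
        linear_combination hprod
    _ = (x - c₁) / ((x - y) * (x - z)) := mul_div_mul_left _ _ hC

theorem gammaSq_mul_self_mul_beta (hC : C ≠ 0) (hprod : c₁ * C = -(x * y * z)) (hx : x ≠ c₁) :
    gammaSq C x y z * x * beta c₁ c₂ x = c₂ * (x / ((x - y) * (x - z))) := by
  rw [gammaSq_mul_self hC hprod, beta]
  field_simp [sub_ne_zero.2 hx]

theorem gammaSq_mul_beta_sq (hC : C ≠ 0) (hprod : c₁ * C = -(x * y * z)) (hx : x ≠ c₁) :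
    gammaSq C x y z * beta c₁ c₂ x ^ 2 = c₂ ^ 2 * (x / ((x - c₁) * (x - y) * (x - z))) := by
  calc gammaSq C x y z * beta c₁ c₂ x ^ 2
      = gammaSq C x y z * x * (c₂ ^ 2 * x / (x - c₁) ^ 2) := by
        rw [beta, div_pow, mul_pow]
        ring
    _ = c₂ ^ 2 * (x / ((x - c₁) * (x - y) * (x - z))) := by
        rw [gammaSq_mul_self hC hprod]
        field_simp [sub_ne_zero.2 hx]

end Frame

theorem gamma_sq_beta_identities (a b c₁ c₂ B C α₁ α₂ α₃ β₁ β₂ β₃ γ₁sq γ₂sq γ₃sq : ℝ)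
    (hB : B = 2*c₁*a + 3*c₁^2 + c₂*b + 3*c₂^2)
    (hC : C = a*c₁ + b*c₂ + 2*c₁^2 + 2*c₂^2)
    (hCne : C ≠ 0)
    (h12 : α₁ ≠ α₂) (h13 : α₁ ≠ α₃) (h23 : α₂ ≠ α₃)
    (hc1 : α₁ ≠ c₁) (hc2 : α₂ ≠ c₁) (hc3 : α₃ ≠ c₁)
    (hr1 : α₁^3 + a*α₁^2 - B*α₁ + c₁*C = 0)
    (hr2 : α₂^3 + a*α₂^2 - B*α₂ + c₁*C = 0)
    (hr3 : α₃^3 + a*α₃^2 - B*α₃ + c₁*C = 0)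
    (hβ1 : β₁ = c₂*α₁/(α₁ - c₁)) (hβ2 : β₂ = c₂*α₂/(α₂ - c₁)) (hβ3 : β₃ = c₂*α₃/(α₃ - c₁))
    (hγ1 : γ₁sq = (C + α₂*α₃)/(C*(α₁-α₂)*(α₁-α₃)))
    (hγ2 : γ₂sq = (C + α₁*α₃)/(C*(α₂-α₁)*(α₂-α₃)))
    (hγ3 : γ₃sq = (C + α₁*α₂)/(C*(α₃-α₁)*(α₃-α₂))) :
    γ₁sq*α₁*β₁ + γ₂sq*α₂*β₂ + γ₃sq*α₃*β₃ = 0 ∧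
    γ₁sq*β₁^2 + γ₂sq*β₂^2 + γ₃sq*β₃^2 = 1 := by
  have hfac := cubic_eq_prod_sub_of_roots (a := a) (b := -B) (c := c₁ * C) h12 h13 h23
    (by linear_combination hr1) (by linear_combination hr2) (by linear_combination hr3)
  have hprod : c₁ * C = -(α₁ * α₂ * α₃) := by linear_combination hfac 0
  have hp₁ : (c₁ - α₁) * (c₁ - α₂) * (c₁ - α₃) = -(c₁ * c₂ ^ 2) := by
    linear_combination -(hfac c₁) - c₁ * hB + c₁ * hC
  have hc₁c₂ : c₁ * c₂ ^ 2 ≠ 0 := by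
    rw [← neg_ne_zero, ← hp₁]
    exact mul_ne_zero (mul_ne_zero (sub_ne_zero.2 hc1.symm) (sub_ne_zero.2 hc2.symm))
      (sub_ne_zero.2 hc3.symm)
  have hprod₂ : c₁ * C = -(α₂ * α₁ * α₃) := by linear_combination hprod
  have hprod₃ : c₁ * C = -(α₃ * α₁ * α₂) := by linear_combination hprod
  rw [show γ₁sq = gammaSq C α₁ α₂ α₃ from hγ1, show γ₂sq = gammaSq C α₂ α₁ α₃ from hγ2,
    show γ₃sq = gammaSq C α₃ α₁ α₂ from hγ3, show β₁ = beta c₁ c₂ α₁ from hβ1,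
    show β₂ = beta c₁ c₂ α₂ from hβ2, show β₃ = beta c₁ c₂ α₃ from hβ3]
  constructor
  · rw [gammaSq_mul_self_mul_beta hCne hprod hc1, gammaSq_mul_self_mul_beta hCne hprod₂ hc2,
      gammaSq_mul_self_mul_beta hCne hprod₃ hc3, ← mul_add, ← mul_add,
      div_sub_mul_sub_add_cyclic_eq_zero h12 h13 h23, mul_zero]
  · rw [gammaSq_mul_beta_sq hCne hprod hc1, gammaSq_mul_beta_sq hCne hprod₂ hc2,
      gammaSq_mul_beta_sq hCne hprod₃ hc3, ← mul_add, ← mul_add,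
      div_sub_mul_sub_mul_sub_add_cyclic h12 h13 h23 hc1.symm hc2.symm hc3.symm, hp₁,
      neg_div_neg_eq, mul_div_assoc', mul_comm (c₂ ^ 2), div_self hc₁c₂]
end

section
/- Let c₃, ℭ be real constants with ℭ > 0, and u: ℝ → ℝ twice differentiable satisfying (u')² + e^{2u} + c₃²e^{-6u} = ℭ and e^{2u} < ℭ everywhere, and u'' + e^{2u} − 3c₃²e^{-6u} = 0. Define Q(z) = √(ℭ − e^{2u(z)}) · exp(i c₃ ∫₀^z e^{-u(s)}/(e^{2u(s)} − ℭ) ds). Then Q satisfies the ODE Q'(z)·(i c₃ − u'(z)e^{3u(z)}) = e^{5u(z)} Q(z). -/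
open Real Complex

/-!
Write `Q = A · exp (i c₃ F)` with `A = √(ℭ - e^{2u})` and `F' = e^{-u} / (e^{2u} - ℭ) = -e^{-u} / A²`.
Since `A' = -u' e^{2u} / A`, the product rule gives `Q' = -e^{-u} (i c₃ + u' e^{3u}) Q / A²`, so
`Q' (i c₃ - u' e^{3u}) = e^{-u} (c₃² + u'² e^{6u}) Q / A²`, and the first integral
`u'² + e^{2u} + c₃² e^{-6u} = ℭ` says exactly that `c₃² + u'² e^{6u} = A² e^{6u}`.
-/

theorem hasDerivAt_sqrt_sub_exp_two_mul {u : ℝ → ℝ} {u' C z : ℝ} (hu : HasDerivAt u u' z)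
    (hlt : Real.exp (2 * u z) < C) :
    HasDerivAt (fun x => √(C - Real.exp (2 * u x)))
      (-(u' * Real.exp (2 * u z)) / √(C - Real.exp (2 * u z))) z := by
  have hinner : HasDerivAt (fun x => C - Real.exp (2 * u x)) (-(Real.exp (2 * u z) * (2 * u'))) z :=
    ((hu.const_mul 2).exp.const_sub C)
  convert hinner.sqrt (sub_pos.2 hlt).ne' using 1
  field_simp

theorem hasDerivAt_ofReal_mul_cexp_integral {A : ℝ → ℝ} {f : ℝ → ℂ} {A' : ℝ} {c : ℂ} {z : ℝ}
    (hA : HasDerivAt A A' z) (hf : Continuous f) :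
    HasDerivAt (fun x => (A x : ℂ) * cexp (c * ∫ s in (0 : ℝ)..x, f s))
      ((A' + A z * c * f z) * cexp (c * ∫ s in (0 : ℝ)..z, f s)) z := by
  have hexp := ((hf.integral_hasStrictDerivAt 0 z).hasDerivAt.const_mul c).cexp
  exact (hA.ofReal_comp.mul hexp).congr_deriv (by ring)

theorem first_integral_identity_pow {e p c C A : ℝ} (B : ℂ) (he : e ≠ 0) (hA : A ≠ 0)
    (hA2 : A ^ 2 = C - e ^ 2) (hp : p ^ 2 + e ^ 2 + c ^ 2 * (e ^ 6)⁻¹ = C) :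
    ((-(p * e ^ 2) / A : ℝ) + A * (I * c) * (e⁻¹ / (e ^ 2 - C) : ℂ)) * B * (I * c - p * e ^ 3) =
      e ^ 5 * (A * B) := by
  have hden : (e : ℂ) ^ 2 - C = -(A : ℂ) ^ 2 := by exact_mod_cast (by linarith : e ^ 2 - C = -A ^ 2)
  have hp6 : (p : ℂ) ^ 2 * e ^ 6 + c ^ 2 = A ^ 2 * e ^ 6 := by
    have : p ^ 2 * e ^ 6 + c ^ 2 = A ^ 2 * e ^ 6 := by
      rw [hA2, ← hp]; field_simp; ring
    exact_mod_cast this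
  have he0 : (e : ℂ) ≠ 0 := ofReal_ne_zero.2 he
  have hA0 : (A : ℂ) ≠ 0 := ofReal_ne_zero.2 hA
  push_cast
  rw [hden]
  field_simp
  linear_combination B * hp6 - B * c ^ 2 * I_sq

theorem first_integral_identity {w p c C A : ℝ} (B : ℂ) (hA : A ≠ 0)
    (hA2 : A ^ 2 = C - Real.exp (2 * w))
    (hp : p ^ 2 + Real.exp (2 * w) + c ^ 2 * Real.exp (-6 * w) = C) :
    ((-(p * Real.exp (2 * w)) / A : ℝ) +
        A * (I * c) * (Real.exp (-w) / (Real.exp (2 * w) - C) : ℂ)) * B *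
        (I * c - p * Real.exp (3 * w)) =
      Real.exp (5 * w) * (A * B) := by
  have hexp : ∀ n : ℕ, Real.exp (n * w) = Real.exp w ^ n := fun n => Real.exp_nat_mul w n
  have h2 : Real.exp (2 * w) = Real.exp w ^ 2 := by exact_mod_cast hexp 2
  have h6 : Real.exp (-6 * w) = (Real.exp w ^ 6)⁻¹ := by
    rw [neg_mul, Real.exp_neg]; exact_mod_cast congrArg (·⁻¹) (hexp 6)
  rw [h2, h6] at hp
  rw [h2] at hA2
  have h3 : Real.exp (3 * w) = Real.exp w ^ 3 := by exact_mod_cast hexp 3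
  have h5 : Real.exp (5 * w) = Real.exp w ^ 5 := by exact_mod_cast hexp 5
  have key := first_integral_identity_pow B (Real.exp_pos w).ne' hA hA2 hp
  rw [h2, h3, h5, Real.exp_neg]
  push_cast at key ⊢
  exact key

theorem Q_ode_general (c₃ C : ℝ) (u u' : ℝ → ℝ)
    (hu : ∀ z, HasDerivAt u (u' z) z)
    (heq : ∀ z, (u' z)^2 + Real.exp (2 * u z) + c₃^2 * Real.exp (-6 * u z) = C)
    (hlt : ∀ z, Real.exp (2 * u z) < C)
    (Q : ℝ → ℂ)
    (hQ : ∀ z, Q z = (Real.sqrt (C - Real.exp (2 * u z)) : ℂ) *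
      Complex.exp (Complex.I * c₃ *
        ∫ s in (0:ℝ)..z, ((Real.exp (-u s) / (Real.exp (2 * u s) - C)) : ℂ))) :
    ∀ z, deriv Q z * (Complex.I * c₃ - (u' z : ℂ) * Real.exp (3 * u z)) =
      (Real.exp (5 * u z) : ℂ) * Q z := by
  have hu_cont : Continuous u := continuous_iff_continuousAt.2 fun z => (hu z).continuousAt
  have hf : Continuous fun s => ((Real.exp (-u s) / (Real.exp (2 * u s) - C)) : ℂ) := by
    refine Continuous.div (by fun_prop) (by fun_prop) fun s => ?_
    exact_mod_cast (sub_neg.2 (hlt s)).ne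
  intro z
  have hQ' := hasDerivAt_ofReal_mul_cexp_integral (c := I * c₃)
    (hasDerivAt_sqrt_sub_exp_two_mul (hu z) (hlt z)) hf
  rw [(hQ'.congr_of_eventuallyEq (Filter.Eventually.of_forall hQ)).deriv, hQ z]
  exact first_integral_identity _ (Real.sqrt_pos.2 (sub_pos.2 (hlt z))).ne'
    (Real.sq_sqrt (sub_pos.2 (hlt z)).le) (heq z)

/-- Q(z) = √(ℭ − e^{2u})·exp(i c₃ ∫₀^z e^{-u}/(e^{2u} − ℭ)) satisfies
Q'·(i c₃ − u'e^{3u}) = e^{5u} Q. -/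
theorem Q_ode (c₃ C : ℝ) (hC : 0 < C) (u u' u'' : ℝ → ℝ)
    (hu : ∀ z, HasDerivAt u (u' z) z)
    (hu' : ∀ z, HasDerivAt u' (u'' z) z)
    (heq : ∀ z, (u' z)^2 + Real.exp (2 * u z) + c₃^2 * Real.exp (-6 * u z) = C)
    (hlt : ∀ z, Real.exp (2 * u z) < C)
    (heq2 : ∀ z, u'' z + Real.exp (2 * u z) - 3 * c₃^2 * Real.exp (-6 * u z) = 0)
    (Q : ℝ → ℂ)
    (hQ : ∀ z, Q z = (Real.sqrt (C - Real.exp (2 * u z)) : ℂ) *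
      Complex.exp (Complex.I * c₃ *
        ∫ s in (0:ℝ)..z, ((Real.exp (-u s) / (Real.exp (2 * u s) - C)) : ℂ))) :
    ∀ z, deriv Q z * (Complex.I * c₃ - (u' z : ℂ) * Real.exp (3 * u z)) =
      (Real.exp (5 * u z) : ℂ) * Q z :=
  Q_ode_general c₃ C u u' hu heq hlt Q hQ
end

section
/- Let c₃, ℭ be real and q: ℝ → ℝ a differentiable negative-valued function. Define u(z) = −log(2√(−q(z))). Then u satisfies (u')² + e^{2u} + c₃²e^{-6u} − ℭ = 0 if and only if q satisfies (q')² = 256 c₃² q⁵ + 4ℭ q² + q. -/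
/-!
With u = -log(4(-q))/2 one has e^{2u} = 1/(-4q), e^{-6u} = (-4q)³ and u' = -q'/(2q), so the
left-hand side of the u-equation is ((q')² - 256c₃²q⁵ - 4ℭq² - q)/(4q²), and q ≠ 0.
-/

open Real

-- Also true where f is not differentiable: then neither is log ∘ f, as f = exp ∘ log ∘ f.
theorem deriv_log_comp_of_pos {f : ℝ → ℝ} (hf : ∀ x, 0 < f x) (x : ℝ) :
    deriv (fun x => log (f x)) x = deriv f x / f x := by
  by_cases hfx : DifferentiableAt ℝ f x
  · exact deriv.log hfx (hf x).ne'
  · have hlog : ¬DifferentiableAt ℝ (fun x => log (f x)) x := fun h =>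
      hfx <| by simpa only [exp_log (hf _)] using h.exp
    rw [deriv_zero_of_not_differentiableAt hfx, deriv_zero_of_not_differentiableAt hlog,
      zero_div]

theorem log_two_mul_sqrt {w : ℝ} (hw : 0 ≤ w) : log (2 * √w) = log (4 * w) / 2 := by
  rw [← log_sqrt (by positivity), sqrt_mul (by norm_num), show (4 : ℝ) = 2 ^ 2 by norm_num,
    sqrt_sq zero_le_two]

theorem div_sq_add_inv_add_mul_cube_sub_eq_zero_iff {q : ℝ} (hq : q ≠ 0) (a c₃ C : ℝ) :
    (-a / (2 * q)) ^ 2 + (4 * -q)⁻¹ + c₃ ^ 2 * (4 * -q) ^ 3 - C = 0 ↔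
      a ^ 2 = 256 * c₃ ^ 2 * q ^ 5 + 4 * C * q ^ 2 + q := by
  have hexpand : (-a / (2 * q)) ^ 2 + (4 * -q)⁻¹ + c₃ ^ 2 * (4 * -q) ^ 3 - C =
      (a ^ 2 - (256 * c₃ ^ 2 * q ^ 5 + 4 * C * q ^ 2 + q)) / (4 * q ^ 2) := by
    field_simp
    ring
  rw [hexpand, div_eq_zero_iff, sub_eq_zero, or_iff_left (by positivity)]

theorem change_of_variables_general (c₃ C : ℝ) (q : ℝ → ℝ)
    (hqneg : ∀ z, q z < 0)
    (u : ℝ → ℝ) (hu : ∀ z, u z = -Real.log (2 * Real.sqrt (-q z))) :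
    (∀ z, (deriv u z)^2 + exp (2 * u z) + c₃^2 * exp (-6 * u z) - C = 0) ↔
    (∀ z, (deriv q z)^2 = 256 * c₃^2 * (q z)^5 + 4 * C * (q z)^2 + q z) := by
  have hpos : ∀ z, 0 < 4 * -q z := fun z => by linarith [hqneg z]
  have hu' : u = fun z => -log (4 * -q z) / 2 := by
    funext z
    rw [hu z, log_two_mul_sqrt (by linarith [hqneg z]), neg_div]
  have hderiv : ∀ z, deriv u z = -deriv q z / (2 * q z) := fun z => by
    have hneg : deriv (fun z => 4 * -q z) z = 4 * -deriv q z := by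
      simp only [deriv_const_mul_field', deriv.fun_neg]
    rw [hu', deriv_div_const, deriv.fun_neg, deriv_log_comp_of_pos hpos, hneg]
    field_simp [(hqneg z).ne]
  have hexp2 : ∀ z, exp (2 * u z) = (4 * -q z)⁻¹ := fun z => by
    rw [hu', mul_div_cancel₀ _ two_ne_zero, exp_neg, exp_log (hpos z)]
  have hexp6 : ∀ z, exp (-6 * u z) = (4 * -q z) ^ 3 := fun z => by
    rw [hu', show -6 * (-log (4 * -q z) / 2) = (3 : ℕ) * log (4 * -q z) by push_cast; ring,
      exp_nat_mul, exp_log (hpos z)]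
  refine forall_congr' fun z => ?_
  rw [hderiv, hexp2, hexp6]
  exact div_sq_add_inv_add_mul_cube_sub_eq_zero_iff (hqneg z).ne _ _ _

/-- The substitution u = −log(2√(−q)) converts the ODE for the conformal factor u
into the polynomial ODE (q')² = 256c₃²q⁵ + 4ℭq² + q. -/
theorem change_of_variables (c₃ C : ℝ) (q : ℝ → ℝ)
    (hq : Differentiable ℝ q) (hqneg : ∀ z, q z < 0)
    (u : ℝ → ℝ) (hu : ∀ z, u z = -Real.log (2 * Real.sqrt (-q z))) :
    (∀ z, (deriv u z)^2 + exp (2 * u z) + c₃^2 * exp (-6 * u z) - C = 0) ↔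
    (∀ z, (deriv q z)^2 = 256 * c₃^2 * (q z)^5 + 4 * C * (q z)^2 + q z) :=
  change_of_variables_general c₃ C q hqneg u hu
end
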